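/- arXiv:2101.00144 — 3 statements merged into one kernel-verified Lean document; each statement's English description precedes it below -/
import Mathlib

section
/- Let x, y, z ≥ 0 and set x* = y + z - x, and assume 0 ≤ x ≤ y + z (so x* ≥ 0). Then min(√x + √y, √x* + √z) - max(|√x - √y|, |√x* - √z|) = 2·min(√x, √x*, √y, √z). -/
/-!
With `a = √x`, `b = √y`, `c = √x*`, `d = √z` the hypothesis `x + x* = y + z` reads
`a² + c² = b² + d²`. The left side is symmetric under swapping the pairs `(a, b) ↔ (c, d)` and
under swapping inside both pairs at once, so we may assume `a` is the smallest of the four.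
Then `b ≤ c` (as `c² - b² = d² - a² ≥ 0`), so the minimum is `a + b`, and `c - d ≤ b - a`
(as `(a + c)² ≤ (b + d)²`), so the maximum is `b - a`; the difference is `2a`.
-/

namespace BoltzmannNordheim

/-- The length of `[|a - b|, a + b] ∩ [|c - d|, c + d]` when that intersection is nonempty. -/
def overlap (a b c d : ℝ) : ℝ := min (a + b) (c + d) - max |a - b| |c - d|

variable {a b c d : ℝ}

theorem overlap_comm : overlap a b c d = overlap c d a b := by
  simp only [overlap, min_comm, max_comm]

theorem overlap_swap : overlap a b c d = overlap b a d c := by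
  simp only [overlap, add_comm, abs_sub_comm]

theorem overlap_eq_two_mul_of_le (ha : 0 ≤ a) (hab : a ≤ b) (hac : a ≤ c) (had : a ≤ d)
    (key : a ^ 2 + c ^ 2 = b ^ 2 + d ^ 2) : overlap a b c d = 2 * a := by
  have hbc : b ≤ c := by nlinarith
  have hdc : d ≤ c := by nlinarith
  have hsum : a + b ≤ c + d := by linarith
  have hdiff : c - d ≤ b - a := by nlinarith
  rw [overlap, min_eq_left hsum, abs_of_nonpos (by linarith), abs_of_nonneg (by linarith),
    max_eq_left (by linarith)]
  ring

theorem overlap_eq_two_mul_min (ha : 0 ≤ a) (hb : 0 ≤ b) (hc : 0 ≤ c) (hd : 0 ≤ d)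
    (key : a ^ 2 + c ^ 2 = b ^ 2 + d ^ 2) :
    overlap a b c d = 2 * min (min a c) (min b d) := by
  rcases le_total (min a c) (min b d) with h | h
  · rw [min_eq_left h]
    rcases le_total a c with hac | hca
    · rw [min_eq_left hac] at h ⊢
      exact overlap_eq_two_mul_of_le ha (le_min_iff.1 h).1 hac (le_min_iff.1 h).2 key
    · rw [min_eq_right hca] at h ⊢
      rw [overlap_comm]
      exact overlap_eq_two_mul_of_le hc (le_min_iff.1 h).2 hca (le_min_iff.1 h).1 (by linarith)
  · rw [min_eq_right h]
    rcases le_total b d with hbd | hdb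
    · rw [min_eq_left hbd] at h ⊢
      rw [overlap_swap]
      exact overlap_eq_two_mul_of_le hb (le_min_iff.1 h).1 hbd (le_min_iff.1 h).2 key.symm
    · rw [min_eq_right hdb] at h ⊢
      rw [overlap_swap, overlap_comm]
      exact overlap_eq_two_mul_of_le hd (le_min_iff.1 h).2 hdb (le_min_iff.1 h).1 (by linarith)

end BoltzmannNordheim

open BoltzmannNordheim in
theorem stmt_0 (x y z : ℝ) (hx : 0 ≤ x) (hy : 0 ≤ y) (hz : 0 ≤ z) (hxyz : x ≤ y + z) :
    min (Real.sqrt x + Real.sqrt y) (Real.sqrt (y + z - x) + Real.sqrt z)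
      - max |Real.sqrt x - Real.sqrt y| |Real.sqrt (y + z - x) - Real.sqrt z|
    = 2 * min (min (Real.sqrt x) (Real.sqrt (y + z - x))) (min (Real.sqrt y) (Real.sqrt z)) := by
  refine overlap_eq_two_mul_min (Real.sqrt_nonneg _) (Real.sqrt_nonneg _) (Real.sqrt_nonneg _)
    (Real.sqrt_nonneg _) ?_
  rw [Real.sq_sqrt hx, Real.sq_sqrt hy, Real.sq_sqrt hz, Real.sq_sqrt (by linarith)]
  ring
end

section
/- Let 0 < p ≤ 1/2 and let 0 < y ≤ z. Define W_H(x,y,z) = min(√x, √y, √z, √(y+z-x))/√(xyz) for 0 < x < y + z. Then ∫₀^{y+z} W_H(x, y, z) · x^{-p} · √x dx ≤ 4·z^{1/2 - p}. -/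
/-!
Since `min (√x, √y, √z, √(y+z-x)) ≤ √y`, the weight satisfies `W_H(x,y,z) · √x ≤ 1/√z` on the
whole interval, so the integral is at most `(y+z)^(1-p) / ((1-p) √z)`. With `1/(1-p) ≤ 2` and
`(y+z)^(1-p) ≤ y^(1-p) + z^(1-p) ≤ 2 z^(1-p)` this is at most `4 z^(1/2-p)`.
-/

open Real intervalIntegral

noncomputable def nordheimWeight (x y z : ℝ) : ℝ :=
  min (min √x √y) (min √z √(y + z - x)) / √(x * y * z)

lemma nordheimWeight_nonneg (x y z : ℝ) : 0 ≤ nordheimWeight x y z := by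
  unfold nordheimWeight
  positivity

lemma nordheimWeight_mul_sqrt_le {x y : ℝ} (hx : 0 < x) (hy : 0 < y) (z : ℝ) :
    nordheimWeight x y z * √x ≤ 1 / √z := by
  have hmin : min (min √x √y) (min √z √(y + z - x)) ≤ √y :=
    (min_le_left _ _).trans (min_le_right _ _)
  have hsx : 0 < √x := sqrt_pos.mpr hx
  have hsy : 0 < √y := sqrt_pos.mpr hy
  calc nordheimWeight x y z * √x ≤ √y / (√x * √y * √z) * √x := by
        unfold nordheimWeight
        rw [sqrt_mul (by positivity), sqrt_mul hx.le]
        gcongr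
    _ = 1 / √z := by
        rw [div_mul_eq_mul_div, mul_comm √y, div_mul_cancel_left₀ (mul_pos hsx hsy).ne', one_div]

lemma intervalIntegral_le_of_nonneg_of_le {f g : ℝ → ℝ} {a b : ℝ} (hab : a ≤ b)
    (hg : IntervalIntegrable g MeasureTheory.volume a b) (hf : ∀ x ∈ Set.Ioc a b, 0 ≤ f x)
    (hfg : ∀ x ∈ Set.Ioc a b, f x ≤ g x) : ∫ x in a..b, f x ≤ ∫ x in a..b, g x := by
  rw [integral_of_le hab, integral_of_le hab]
  exact MeasureTheory.integral_mono_of_nonneg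
    (MeasureTheory.ae_restrict_of_forall_mem measurableSet_Ioc hf) hg.1
    (MeasureTheory.ae_restrict_of_forall_mem measurableSet_Ioc hfg)

lemma add_rpow_le_two_mul_rpow {y z q : ℝ} (hy : 0 ≤ y) (hyz : y ≤ z) (hq0 : 0 ≤ q)
    (hq1 : q ≤ 1) : (y + z) ^ q ≤ 2 * z ^ q := by
  have hyq : y ^ q ≤ z ^ q := rpow_le_rpow hy hyz hq0
  linarith [rpow_add_le_add_rpow hy (hy.trans hyz) hq0 hq1]

theorem stmt_9 (p y z : ℝ) (hp : 0 < p) (hp2 : p ≤ 1/2) (hy : 0 < y) (hyz : y ≤ z) :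
    ∫ x in (0:ℝ)..(y + z),
        (min (min (Real.sqrt x) (Real.sqrt y)) (min (Real.sqrt z) (Real.sqrt (y + z - x))) /
          Real.sqrt (x * y * z)) * x ^ (-p) * Real.sqrt x
      ≤ 4 * z ^ ((1:ℝ)/2 - p) := by
  have hz : 0 < z := hy.trans_le hyz
  have hexp : -1 < -p := by linarith
  have hpoint : ∀ x ∈ Set.Ioc 0 (y + z), nordheimWeight x y z * x ^ (-p) * √x ≤ x ^ (-p) / √z :=
    fun x hx => by
      rw [mul_right_comm, div_eq_mul_one_div, mul_comm (x ^ (-p))]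
      exact mul_le_mul_of_nonneg_right (nordheimWeight_mul_sqrt_le hx.1 hy z)
        (rpow_nonneg hx.1.le _)
  calc ∫ x in (0:ℝ)..(y + z), nordheimWeight x y z * x ^ (-p) * √x
      ≤ ∫ x in (0:ℝ)..(y + z), x ^ (-p) / √z :=
        intervalIntegral_le_of_nonneg_of_le (by positivity)
          ((intervalIntegrable_rpow' hexp).div_const _)
          (fun x hx => mul_nonneg (mul_nonneg (nordheimWeight_nonneg x y z)
            (rpow_nonneg hx.1.le _)) (sqrt_nonneg x)) hpoint
    _ = (y + z) ^ (1 - p) / (1 - p) / √z := by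
        rw [integral_div, integral_rpow (Or.inl hexp), zero_rpow (by linarith), neg_add_eq_sub,
          sub_zero]
    _ ≤ 2 * z ^ (1 - p) / (1 / 2) / √z := by
        gcongr ?_ / ?_ / _
        · exact add_rpow_le_two_mul_rpow hy.le hyz (by linarith) (by linarith)
        · linarith
    _ = 4 * (z ^ (1 - p) / z ^ ((1:ℝ)/2)) := by rw [sqrt_eq_rpow]; ring
    _ = 4 * z ^ ((1:ℝ)/2 - p) := by rw [← rpow_sub hz]; ring_nf
end

section
/- Let v, v* ∈ ℝ³, ω ∈ S², v' = v - ((v-v*)·ω)ω, v*' = v* + ((v-v*)·ω)ω, and ⟨u⟩ = (1 + |u|²)^{1/2}. Then for every real s ≥ 4, with θ = arccos(|(v - v*)·ω|/|v - v*|), one has ⟨v'⟩^s + ⟨v*'⟩^s - ⟨v⟩^s - ⟨v*⟩^s ≤ 2^{s+1}(⟨v⟩^{s-1}⟨v*⟩ + ⟨v⟩⟨v*⟩^{s-1}) - 2·cos²θ·sin²θ·⟨v⟩^s. -/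
/-!
Write `x, y, x', y'` for `⟨v⟩, ⟨v*⟩, ⟨v'⟩, ⟨v*'⟩`, so that `x'² + y'² = x² + y² =: S`.
Since `s/2 ≥ 2`, the power `t ↦ t^(s/2)` is superadditive in the quantitative form
`x'^s + y'^s ≤ S^(s/2) - 2 x'² y'² S^(s/2 - 2)`, while for `y ≤ x` convexity gives the chord bound
`S^(s/2) ≤ x^s + (2^(s/2) - 1) x^(s-1) y`. It remains to compare the gain `2 x'² y'² S^(s/2-2)`
with `2 cos²θ sin²θ x^s`. With `u = v - v*` one has `cos θ sin θ |u|² = |u·ω| |u - (u·ω)ω|`, and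
these two factors are `|v*' - v*|` and `|v' - v*|`; hence `cos θ sin θ ⟨v⟩² ≤ ⟨v'⟩⟨v*'⟩ + 6⟨v⟩⟨v*⟩`.
When `x ≤ y` the negative term is simply absorbed by `x y^(s-1)`.
-/

open Real
open scoped RealInnerProductSpace

lemma sq_rpow_div_two {x : ℝ} (hx : 0 ≤ x) (s : ℝ) : (x ^ 2) ^ (s / 2) = x ^ s := by
  rw [← rpow_natCast_mul hx]
  congr 1
  push_cast
  ring

lemma rpow_eq_rpow_sub_mul_pow {x : ℝ} (hx : 0 ≤ x) {s : ℝ} (hs : s ≠ 0) (n : ℕ) :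
    x ^ s = x ^ (s - n) * x ^ n := by
  rw [← rpow_add_natCast' hx (by simpa using hs), sub_add_cancel]

lemma add_rpow_le_rpow_add_mul {a b p : ℝ} (hb : 0 ≤ b) (hba : b ≤ a) (hp : 1 ≤ p) :
    (a + b) ^ p ≤ a ^ p + (2 ^ p - 1) * a ^ (p - 1) * b := by
  obtain rfl | ha := (hb.trans hba).eq_or_lt
  · obtain rfl : b = 0 := le_antisymm hba hb
    simp [zero_rpow (by linarith : p ≠ 0)]
  set t := b / a
  have ht0 : 0 ≤ t := div_nonneg hb ha.le
  have ht1 : t ≤ 1 := (div_le_one ha).2 hba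
  have hconv := (convexOn_rpow hp).2 (Set.mem_Ici.2 ha.le)
    (Set.mem_Ici.2 (by positivity : 0 ≤ 2 * a)) (sub_nonneg.2 ht1) ht0 (sub_add_cancel 1 t)
  have hmid : (1 - t) • a + t • (2 * a) = a + b := by
    simp only [smul_eq_mul, t]; field_simp; ring
  dsimp only at hconv
  rw [hmid, smul_eq_mul, smul_eq_mul, mul_rpow zero_le_two ha.le] at hconv
  calc (a + b) ^ p ≤ (1 - t) * a ^ p + t * (2 ^ p * a ^ p) := hconv
    _ = a ^ p + (2 ^ p - 1) * (a ^ p / a) * b := by simp only [t]; field_simp; ring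
    _ = a ^ p + (2 ^ p - 1) * a ^ (p - 1) * b := by rw [rpow_sub_one ha.ne']

lemma sq_add_sq_rpow_le {x y s : ℝ} (hy : 0 ≤ y) (hyx : y ≤ x) (hs : 2 ≤ s) :
    (x ^ 2 + y ^ 2) ^ (s / 2) ≤ x ^ s + ((2:ℝ) ^ (s / 2) - 1) * x ^ (s - 1) * y := by
  have hx : 0 ≤ x := hy.trans hyx
  have hchord := add_rpow_le_rpow_add_mul (sq_nonneg y) (pow_le_pow_left₀ hy hyx 2)
    (by linarith : 1 ≤ s / 2)
  rw [sq_rpow_div_two hx, show s / 2 - 1 = (s - 2) / 2 by ring, sq_rpow_div_two hx] at hchord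
  have hq : 0 ≤ (2:ℝ) ^ (s / 2) - 1 := by
    have := one_le_rpow (by norm_num : (1:ℝ) ≤ 2) (by linarith : 0 ≤ s / 2)
    linarith
  have hmono : x ^ (s - 2) * y ^ 2 ≤ x ^ (s - 1) * y := by
    rw [show s - 1 = s - 2 + 1 by ring, rpow_add' hx (by linarith), rpow_one]
    have := rpow_nonneg hx (s - 2)
    calc x ^ (s - 2) * y ^ 2 = x ^ (s - 2) * y * y := by ring
      _ ≤ x ^ (s - 2) * x * y := by gcongr
  calc (x ^ 2 + y ^ 2) ^ (s / 2) ≤ x ^ s + ((2:ℝ) ^ (s / 2) - 1) * x ^ (s - 2) * y ^ 2 := hchord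
    _ ≤ x ^ s + (2 ^ (s / 2) - 1) * x ^ (s - 1) * y := by
      rw [mul_assoc, mul_assoc]; gcongr

lemma rpow_add_rpow_add_le {x y s : ℝ} (hx : 0 ≤ x) (hy : 0 ≤ y) (hs : 4 ≤ s) :
    x ^ s + y ^ s + 2 * x ^ 2 * y ^ 2 * (x ^ 2 + y ^ 2) ^ (s / 2 - 2)
      ≤ (x ^ 2 + y ^ 2) ^ (s / 2) := by
  set S := x ^ 2 + y ^ 2
  have hS : 0 ≤ S := by positivity
  have hsplit : ∀ z : ℝ, 0 ≤ z → z ^ (s / 2) = z ^ (s / 2 - 2) * z ^ 2 := fun z hz ↦ by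
    exact_mod_cast rpow_eq_rpow_sub_mul_pow hz (by linarith : s / 2 ≠ 0) 2
  have hle : ∀ z : ℝ, 0 ≤ z → z ≤ S → z ^ (s / 2) ≤ S ^ (s / 2 - 2) * z ^ 2 :=
    fun z hz hzS ↦ by
      rw [hsplit z hz]
      gcongr
      linarith
  have hx2 : x ^ 2 ≤ S := le_add_of_nonneg_right (sq_nonneg y)
  have hy2 : y ^ 2 ≤ S := le_add_of_nonneg_left (sq_nonneg x)
  have hxs := hle _ (sq_nonneg x) hx2
  have hys := hle _ (sq_nonneg y) hy2
  rw [sq_rpow_div_two hx] at hxs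
  rw [sq_rpow_div_two hy] at hys
  calc x ^ s + y ^ s + 2 * x ^ 2 * y ^ 2 * S ^ (s / 2 - 2)
      ≤ S ^ (s / 2 - 2) * (x ^ 2) ^ 2 + S ^ (s / 2 - 2) * (y ^ 2) ^ 2
        + 2 * x ^ 2 * y ^ 2 * S ^ (s / 2 - 2) := by linarith
    _ = S ^ (s / 2 - 2) * S ^ 2 := by ring
    _ = S ^ (s / 2) := (hsplit S hS).symm

-- `27 = 2 * 14 - 1`: the chord constant `2^(s/2) - 1` and twice the constant `14` of the
-- geometric estimate have to fit into `2^(s+1)`.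
lemma two_rpow_div_two_add_le {s : ℝ} (hs : 4 ≤ s) : (2:ℝ) ^ (s / 2) + 27 ≤ 2 ^ (s + 1) := by
  set q : ℝ := 2 ^ (s / 2)
  have hq : 4 ≤ q := by
    have := rpow_le_rpow_of_exponent_le (by norm_num : (1:ℝ) ≤ 2) (by linarith : 2 ≤ s / 2)
    norm_num at this
    exact this
  have h2s : (2:ℝ) ^ (s + 1) = 2 * q ^ 2 := by
    rw [← rpow_mul_natCast zero_le_two, rpow_add two_pos, rpow_one]
    ring_nf
  nlinarith

lemma mul_rpow_le_of_mul_pow_four_le {x z c A B s : ℝ} (hx : 0 ≤ x) (hxz : x ^ 2 ≤ z)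
    (hA : 0 ≤ A) (hs : 4 ≤ s) (h : c * x ^ 4 ≤ A + B * x ^ 3) :
    c * x ^ s ≤ A * z ^ (s / 2 - 2) + B * x ^ (s - 1) := by
  have e4 : x ^ s = x ^ (s - 4) * x ^ 4 := by
    exact_mod_cast rpow_eq_rpow_sub_mul_pow hx (by linarith : s ≠ 0) 4
  have e3 : x ^ (s - 1) = x ^ (s - 4) * x ^ 3 := by
    rw [rpow_eq_rpow_sub_mul_pow hx (by linarith : s - 1 ≠ 0) 3]
    norm_num [sub_sub]
  have hmono : x ^ (s - 4) ≤ z ^ (s / 2 - 2) := by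
    rw [← sq_rpow_div_two hx, show s / 2 - 2 = (s - 4) / 2 by ring]
    gcongr
  have hx4 := rpow_nonneg hx (s - 4)
  calc c * x ^ s = c * x ^ 4 * x ^ (s - 4) := by rw [e4]; ring
    _ ≤ (A + B * x ^ 3) * x ^ (s - 4) := by gcongr
    _ = A * x ^ (s - 4) + B * x ^ (s - 1) := by rw [e3]; ring
    _ ≤ A * z ^ (s / 2 - 2) + B * x ^ (s - 1) := by gcongr

lemma povzner_of_sq_add_sq_eq {x y x' y' c s : ℝ} (hx : 0 ≤ x) (hy : 0 ≤ y) (hx' : 0 ≤ x')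
    (hy' : 0 ≤ y') (henergy : x' ^ 2 + y' ^ 2 = x ^ 2 + y ^ 2) (hs : 4 ≤ s) (hc : c ≤ 1 / 4)
    (hgeom : y ≤ x → c * x ^ 4 ≤ x' ^ 2 * y' ^ 2 + 14 * x ^ 3 * y) :
    x' ^ s + y' ^ s - x ^ s - y ^ s
      ≤ 2 ^ (s + 1) * (x ^ (s - 1) * y + x * y ^ (s - 1)) - 2 * c * x ^ s := by
  have hbudget := two_rpow_div_two_add_le hs
  have hdrop := rpow_add_rpow_add_le hx' hy' hs
  rw [henergy] at hdrop
  have hxs := rpow_nonneg hx s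
  have hys := rpow_nonneg hy s
  have hX := mul_nonneg (rpow_nonneg hx (s - 1)) hy
  have hY := mul_nonneg hx (rpow_nonneg hy (s - 1))
  rcases le_total y x with hyx | hxy
  · have hchord := sq_add_sq_rpow_le (s := s) hy hyx (by linarith)
    have hc_term := mul_rpow_le_of_mul_pow_four_le hx (le_add_of_nonneg_right (sq_nonneg y))
      (by positivity : 0 ≤ x' ^ 2 * y' ^ 2) hs (c := c) (B := 14 * y) (by linarith [hgeom hyx])
    have hbudgetX := mul_le_mul_of_nonneg_right hbudget hX
    have h2Y := mul_nonneg (by positivity : (0:ℝ) ≤ 2 ^ (s + 1)) hY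
    rw [mul_assoc] at hchord
    linarith
  · have hchord := sq_add_sq_rpow_le (s := s) hx hxy (by linarith)
    rw [add_comm (y ^ 2)] at hchord
    have hxY : x ^ s ≤ x * y ^ (s - 1) := by
      rw [rpow_eq_rpow_sub_mul_pow hx (by linarith : s ≠ 0) 1, Nat.cast_one, pow_one, mul_comm]
      gcongr
      linarith
    have hcx := mul_le_mul_of_nonneg_right hc hxs
    have hbudgetY := mul_le_mul_of_nonneg_right hbudget hY
    have h2X := mul_nonneg (by positivity : (0:ℝ) ≤ 2 ^ (s + 1)) hX
    have hdrop_nonneg : 0 ≤ 2 * x' ^ 2 * y' ^ 2 * (x ^ 2 + y ^ 2) ^ (s / 2 - 2) := by positivity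
    rw [mul_assoc, mul_comm (y ^ (s - 1))] at hchord
    linarith

lemma sq_mul_pow_four_le {x y x' y' d : ℝ} (hy : 0 ≤ y) (hyx : y ≤ x)
    (henergy : x' ^ 2 + y' ^ 2 = x ^ 2 + y ^ 2) (hd0 : 0 ≤ d) (hd : d ≤ 1 / 2)
    (h : d * x ^ 2 ≤ x' * y' + 6 * x * y) :
    d ^ 2 * x ^ 4 ≤ x' ^ 2 * y' ^ 2 + 14 * x ^ 3 * y := by
  have hx : 0 ≤ x := hy.trans hyx
  have hxy : 0 ≤ x * y := mul_nonneg hx hy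
  rcases le_total x (18 * y) with hsmall | hlarge
  · have hd2 : d ^ 2 ≤ 1 / 4 := by nlinarith
    have hx4 : x ^ 4 ≤ 18 * x ^ 3 * y := by
      have := mul_le_mul_of_nonneg_left hsmall (pow_nonneg hx 3)
      linarith [show x ^ 4 = x ^ 3 * x by ring]
    nlinarith [mul_le_mul_of_nonneg_right hd2 (pow_nonneg hx 4), sq_nonneg (x' * y')]
  · have hx'y' : x' * y' ≤ x ^ 2 := by nlinarith [sq_nonneg (x' - y')]
    calc d ^ 2 * x ^ 4 = (d * x ^ 2) ^ 2 := by ring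
      _ ≤ (x' * y' + 6 * x * y) ^ 2 := by gcongr
      _ = x' ^ 2 * y' ^ 2 + 12 * (x * y) * (x' * y') + 36 * x ^ 2 * y ^ 2 := by ring
      _ ≤ x' ^ 2 * y' ^ 2 + 12 * (x * y) * x ^ 2 + 2 * (x ^ 2 * y) * x := by
        have := mul_le_mul_of_nonneg_left hlarge (mul_nonneg (sq_nonneg x) hy)
        nlinarith [mul_le_mul_of_nonneg_left hx'y' hxy]
      _ = x' ^ 2 * y' ^ 2 + 14 * x ^ 3 * y := by ring

noncomputable section

variable {E : Type*} [NormedAddCommGroup E]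

-- The Japanese bracket `⟨u⟩`.
def bracket (u : E) : ℝ := √(1 + ‖u‖ ^ 2)

lemma bracket_sq (u : E) : bracket u ^ 2 = 1 + ‖u‖ ^ 2 := sq_sqrt (by positivity)

lemma norm_le_bracket (u : E) : ‖u‖ ≤ bracket u := le_sqrt_of_sq_le (by linarith)

lemma one_le_bracket (u : E) : 1 ≤ bracket u := one_le_sqrt.2 (by linarith [sq_nonneg ‖u‖])

lemma bracket_nonneg (u : E) : 0 ≤ bracket u := zero_le_one.trans (one_le_bracket u)

variable [InnerProductSpace ℝ E]

def postVel (v vs ω : E) : E := v - ⟪v - vs, ω⟫ • ω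

def postVelStar (v vs ω : E) : E := vs + ⟪v - vs, ω⟫ • ω

def collisionAngle (v vs ω : E) : ℝ := arccos (|⟪v - vs, ω⟫| / ‖v - vs‖)

variable {ω : E} (v vs : E)

lemma norm_sub_inner_smul_sq (hω : ‖ω‖ = 1) (u : E) :
    ‖u - ⟪u, ω⟫ • ω‖ ^ 2 = ‖u‖ ^ 2 - ⟪u, ω⟫ ^ 2 := by
  rw [norm_sub_sq_real, real_inner_smul_right, norm_smul, hω, norm_eq_abs, mul_one, sq_abs]
  ring

lemma norm_postVel_sq_add_norm_postVelStar_sq (hω : ‖ω‖ = 1) :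
    ‖postVel v vs ω‖ ^ 2 + ‖postVelStar v vs ω‖ ^ 2 = ‖v‖ ^ 2 + ‖vs‖ ^ 2 := by
  have hk : ⟪v - vs, ω⟫ = ⟪v, ω⟫ - ⟪vs, ω⟫ := inner_sub_left v vs ω
  rw [postVel, postVelStar, norm_sub_sq_real, norm_add_sq_real, real_inner_smul_right,
    real_inner_smul_right, norm_smul, hω, norm_eq_abs, mul_one, sq_abs]
  linear_combination (2 * ⟪v - vs, ω⟫) * hk

lemma bracket_postVel_sq_add_bracket_postVelStar_sq (hω : ‖ω‖ = 1) :
    bracket (postVel v vs ω) ^ 2 + bracket (postVelStar v vs ω) ^ 2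
      = bracket v ^ 2 + bracket vs ^ 2 := by
  simp only [bracket_sq]
  linarith [norm_postVel_sq_add_norm_postVelStar_sq v vs hω]

lemma cos_mul_sin_collisionAngle_nonneg :
    0 ≤ cos (collisionAngle v vs ω) * sin (collisionAngle v vs ω) := by
  rw [collisionAngle]
  apply mul_nonneg
  · apply cos_nonneg_of_mem_Icc
    constructor
    · linarith [arccos_nonneg (|⟪v - vs, ω⟫| / ‖v - vs‖), pi_pos]
    · exact arccos_le_pi_div_two.2 (by positivity)
  · exact sin_nonneg_of_nonneg_of_le_pi (arccos_nonneg _) (arccos_le_pi _)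

lemma cos_mul_sin_collisionAngle_mul_norm_sq (hω : ‖ω‖ = 1) :
    cos (collisionAngle v vs ω) * sin (collisionAngle v vs ω) * ‖v - vs‖ ^ 2
      = |⟪v - vs, ω⟫| * ‖v - vs - ⟪v - vs, ω⟫ • ω‖ := by
  set u := v - vs
  set k := ⟪u, ω⟫
  have hku : |k| ≤ ‖u‖ := by simpa [hω] using abs_real_inner_le_norm u ω
  rcases (norm_nonneg u).eq_or_lt with hu | hu
  · rw [← hu] at hku ⊢
    simp [abs_nonpos_iff.1 hku]
  have hperp : √(1 - (|k| / ‖u‖) ^ 2) = ‖u - k • ω‖ / ‖u‖ := by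
    have hW : ‖u - k • ω‖ ^ 2 = ‖u‖ ^ 2 - k ^ 2 := norm_sub_inner_smul_sq hω u
    rw [← sqrt_sq (by positivity : 0 ≤ ‖u - k • ω‖ / ‖u‖), div_pow, div_pow, hW, sq_abs]
    congr 1
    field_simp
  rw [collisionAngle, cos_arccos (by linarith [abs_nonneg k, div_nonneg (abs_nonneg k) hu.le])
    ((div_le_one hu).2 hku), sin_arccos, hperp]
  field_simp

lemma cos_mul_sin_le_half (θ : ℝ) : cos θ * sin θ ≤ 1 / 2 := by
  nlinarith [sq_nonneg (cos θ - sin θ), sin_sq_add_cos_sq θ]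

lemma cos_mul_sin_collisionAngle_mul_norm_sq_le (hω : ‖ω‖ = 1) :
    cos (collisionAngle v vs ω) * sin (collisionAngle v vs ω) * ‖v - vs‖ ^ 2
      ≤ (‖postVelStar v vs ω‖ + ‖vs‖) * (‖postVel v vs ω‖ + ‖vs‖) := by
  rw [cos_mul_sin_collisionAngle_mul_norm_sq v vs hω]
  have hk : |⟪v - vs, ω⟫| = ‖postVelStar v vs ω - vs‖ := by
    simp [postVelStar, norm_smul, hω]
  have hperp : v - vs - ⟪v - vs, ω⟫ • ω = postVel v vs ω - vs := by
    rw [postVel]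
    abel
  rw [hk, hperp]
  gcongr <;> exact norm_sub_le _ _

lemma cos_mul_sin_collisionAngle_mul_bracket_sq_le (hω : ‖ω‖ = 1) (h : bracket vs ≤ bracket v) :
    cos (collisionAngle v vs ω) * sin (collisionAngle v vs ω) * bracket v ^ 2
      ≤ bracket (postVel v vs ω) * bracket (postVelStar v vs ω) + 6 * bracket v * bracket vs := by
  have hdU := cos_mul_sin_collisionAngle_mul_norm_sq_le v vs hω
  set d := cos (collisionAngle v vs ω) * sin (collisionAngle v vs ω)
  have hd0 : 0 ≤ d := cos_mul_sin_collisionAngle_nonneg v vs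
  have hd : d ≤ 1 / 2 := cos_mul_sin_le_half _
  set x := bracket v
  set y := bracket vs
  set P := ‖postVel v vs ω‖
  set Q := ‖postVelStar v vs ω‖
  set U := ‖v - vs‖
  set m := ‖vs‖
  have hx := one_le_bracket v
  have hy := one_le_bracket vs
  have hm : m ≤ y := norm_le_bracket vs
  have hn : ‖v‖ ≤ U + m := by linarith [norm_le_norm_add_norm_sub' v vs]
  have hU : U ≤ x + y := (norm_sub_le v vs).trans (add_le_add (norm_le_bracket v) hm)
  have hPQ : P + Q ≤ 2 * x := by
    have henergy := norm_postVel_sq_add_norm_postVelStar_sq v vs hω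
    have hvs := pow_le_pow_left₀ (norm_nonneg vs) (hm.trans h) 2
    have hv := pow_le_pow_left₀ (norm_nonneg v) (norm_le_bracket v) 2
    nlinarith [sq_nonneg (P - Q), norm_nonneg (postVel v vs ω), norm_nonneg (postVelStar v vs ω)]
  have hPQxy : P * Q ≤ bracket (postVel v vs ω) * bracket (postVelStar v vs ω) :=
    mul_le_mul (norm_le_bracket _) (norm_le_bracket _) (norm_nonneg _) (bracket_nonneg _)
  have h2 : m * (P + Q) ≤ y * (2 * x) := mul_le_mul hm hPQ (by positivity) (by positivity)
  have h3 : m * m ≤ y * y := mul_le_mul hm hm (norm_nonneg _) (by positivity)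
  have h4 : U * m ≤ (x + y) * y := mul_le_mul hU hm (norm_nonneg _) (by positivity)
  have h5 : y * y ≤ x * y := mul_le_mul_of_nonneg_right h (by positivity)
  have h6 : 1 ≤ x * y := one_le_mul_of_one_le_of_one_le hx hy
  calc d * x ^ 2 = d + d * ‖v‖ ^ 2 := by rw [bracket_sq]; ring
    _ ≤ 1 / 2 + d * (U + m) ^ 2 := by gcongr
    _ = 1 / 2 + d * U ^ 2 + d * ((2 * U + m) * m) := by ring
    _ ≤ 1 / 2 + (Q + m) * (P + m) + 1 / 2 * ((2 * U + m) * m) := by gcongr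
    _ ≤ bracket (postVel v vs ω) * bracket (postVelStar v vs ω) + 6 * x * y := by linarith

end

theorem stmt_14 (v vs ω : EuclideanSpace ℝ (Fin 3)) (hω : ‖ω‖ = 1) (s : ℝ) (hs : 4 ≤ s) :
    (Real.sqrt (1 + ‖v - (inner ℝ (v - vs) ω : ℝ) • ω‖ ^ 2)) ^ s
      + (Real.sqrt (1 + ‖vs + (inner ℝ (v - vs) ω : ℝ) • ω‖ ^ 2)) ^ s
      - (Real.sqrt (1 + ‖v‖ ^ 2)) ^ s - (Real.sqrt (1 + ‖vs‖ ^ 2)) ^ s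
    ≤ (2:ℝ) ^ (s + 1) *
        ((Real.sqrt (1 + ‖v‖ ^ 2)) ^ (s - 1) * Real.sqrt (1 + ‖vs‖ ^ 2)
          + Real.sqrt (1 + ‖v‖ ^ 2) * (Real.sqrt (1 + ‖vs‖ ^ 2)) ^ (s - 1))
      - 2 * (Real.cos (Real.arccos (|(inner ℝ (v - vs) ω : ℝ)| / ‖v - vs‖))) ^ 2
          * (Real.sin (Real.arccos (|(inner ℝ (v - vs) ω : ℝ)| / ‖v - vs‖))) ^ 2
          * (Real.sqrt (1 + ‖v‖ ^ 2)) ^ s := by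
  set θ := collisionAngle v vs ω
  have henergy := bracket_postVel_sq_add_bracket_postVelStar_sq v vs hω
  have hd0 : 0 ≤ cos θ * sin θ := cos_mul_sin_collisionAngle_nonneg v vs
  have hd := cos_mul_sin_le_half θ
  have hc : cos θ ^ 2 * sin θ ^ 2 ≤ 1 / 4 := by rw [← mul_pow]; nlinarith
  have hgeom (h : bracket vs ≤ bracket v) : cos θ ^ 2 * sin θ ^ 2 * bracket v ^ 4
      ≤ bracket (postVel v vs ω) ^ 2 * bracket (postVelStar v vs ω) ^ 2
        + 14 * bracket v ^ 3 * bracket vs := by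
    rw [← mul_pow]
    exact sq_mul_pow_four_le (bracket_nonneg vs) h henergy hd0 hd
      (cos_mul_sin_collisionAngle_mul_bracket_sq_le v vs hω h)
  rw [mul_assoc 2 (cos _ ^ 2)]
  exact povzner_of_sq_add_sq_eq (bracket_nonneg v) (bracket_nonneg vs) (bracket_nonneg _)
    (bracket_nonneg _) henergy hs hc hgeom
end
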